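/- Cyclic decomposition of a primary matrix: Let A ∈ GL(n,F) with μ_A = p^m for some monic irreducible p ∈ F[X]. Then there exist vectors v_1, ..., v_k ∈ F^n such that F^n = ⟨v_1⟩_A ⊕ ... ⊕ ⟨v_k⟩_A. -/

import Mathlib

open Polynomial Matrix

/-- `p` is the minimal polynomial of the vector `v` with respect to the matrix `A`
(row vectors, right multiplication). -/
def IsVecMinpoly {F : Type*} [Field F] {n : ℕ} (A : Matrix (Fin n) (Fin n) F)
    (v : Fin n → F) (p : F[X]) : Prop :=
  p.Monic ∧ v ᵥ* (aeval A p) = 0 ∧ ∀ q : F[X], v ᵥ* (aeval A q) = 0 → p ∣ q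

/-- The `A`-span `⟨v⟩_A = {v·p(A) : p ∈ F[X]}` of a vector `v`. -/
def aspan {F : Type*} [Field F] {n : ℕ} (A : Matrix (Fin n) (Fin n) F)
    (v : Fin n → F) : Submodule F (Fin n → F) :=
  Submodule.span F {w | ∃ p : F[X], w = v ᵥ* (aeval A p)}

/-- The companion matrix of a polynomial `p` (for the right-multiplication convention):
identity superdiagonal block, last row the negated coefficients of `p`. -/
def companion {F : Type*} [Field F] (n : ℕ) (p : F[X]) : Matrix (Fin n) (Fin n) F :=
  Matrix.of fun i j => if (i : ℕ) = n - 1 then -p.coeff j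
    else if (i : ℕ) + 1 = (j : ℕ) then 1 else 0

/-!
Let `A` act on `Fⁿ` from the right, making `Fⁿ` a module over the principal ideal domain `F[X]`
in which `X` acts as `A`. The polynomial `p ^ m` annihilates it, so it is a finitely generated
torsion module, hence a finite direct sum of cyclic modules `F[X] ⧸ (qᵢ ^ eᵢ)` by the structure
theorem. The images of the generators `1` are the vectors `vᵢ`, since the `F[X]`-submodule
generated by `v` is exactly `⟨v⟩_A`.
-/

open Module DirectSum

theorem Submodule.Quotient.span_singleton_mk_one_eq_top {R : Type*} [CommRing R] (I : Ideal R) :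
    R ∙ (Submodule.Quotient.mk 1 : R ⧸ I) = ⊤ :=
  (span_singleton_eq_top_iff R _).2 fun v => by
    obtain ⟨r, rfl⟩ := Submodule.Quotient.mk_surjective I v
    exact ⟨r, by rw [← Submodule.Quotient.mk_smul, smul_eq_mul, mul_one]⟩

theorem LinearMap.range_eq_span_singleton {R M N : Type*} [Semiring R] [AddCommMonoid M]
    [Module R M] [AddCommMonoid N] [Module R N] (f : M →ₗ[R] N) {x : M} (hx : R ∙ x = ⊤) :
    range f = R ∙ f x := by
  rw [range_eq_map, ← hx, Submodule.map_span, Set.image_singleton]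

namespace DirectSum

variable {R : Type*} [Ring R] {ι : Type*} [DecidableEq ι]

theorem isInternal_range_lof (Q : ι → Type*) [∀ i, AddCommGroup (Q i)] [∀ i, Module R (Q i)] :
    IsInternal fun i => LinearMap.range (lof R ι Q i) := by
  rw [isInternal_submodule_iff_iSupIndep_and_iSup_eq_top]
  constructor
  · intro i
    have hle : ⨆ (j) (_ : j ≠ i), LinearMap.range (lof R ι Q j) ≤
        LinearMap.ker (component R ι Q i) :=
      iSup₂_le fun j hj => by
        rintro _ ⟨y, rfl⟩
        rw [LinearMap.mem_ker, component.of, dif_neg hj]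
    refine Disjoint.mono_right hle (Submodule.disjoint_def.2 ?_)
    rintro _ ⟨y, rfl⟩ hy
    rw [LinearMap.mem_ker, component.lof_self] at hy
    rw [hy, map_zero]
  · refine Submodule.eq_top_iff'.2 fun x => ?_
    induction x using DirectSum.induction_on with
    | zero => exact zero_mem _
    | of i y => exact Submodule.mem_iSup_of_mem i ⟨y, rfl⟩
    | add x y hx hy => exact add_mem hx hy

theorem IsInternal.map_linearEquiv {M N : Type*} [AddCommGroup M] [Module R M] [AddCommGroup N]
    [Module R N] (e : M ≃ₗ[R] N) {S : ι → Submodule R M} (h : IsInternal S) :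
    IsInternal fun i => (S i).map (e : M →ₗ[R] N) := by
  rw [isInternal_submodule_iff_iSupIndep_and_iSup_eq_top] at h ⊢
  exact ⟨h.1.map_orderIso (Submodule.orderIsoMapComap e),
    by rw [← Submodule.map_iSup, h.2, Submodule.map_top, LinearEquiv.range]⟩

end DirectSum

theorem Module.exists_isInternal_span_singleton_of_isTorsion {R M : Type*} [CommRing R]
    [IsDomain R] [IsPrincipalIdealRing R] [AddCommGroup M] [Module R M] [Module.Finite R M]
    (hM : IsTorsion R M) : ∃ (k : ℕ) (v : Fin k → M), IsInternal fun i => R ∙ v i := by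
  classical
  obtain ⟨ι, _, q, -, e, ⟨f⟩⟩ := Module.equiv_directSum_of_isTorsion hM
  let g := f.trans (lequivCongrLeft R (Fintype.equivFin ι))
  refine ⟨Fintype.card ι, fun k => g.symm (lof R _ _ k (Submodule.Quotient.mk 1)), ?_⟩
  convert (isInternal_range_lof _).map_linearEquiv g.symm with k
  rw [LinearMap.range_eq_span_singleton _ (Submodule.Quotient.span_singleton_mk_one_eq_top _),
    Submodule.map_span, Set.image_singleton, LinearEquiv.coe_coe]

theorem Matrix.vecMulLinear_pow_apply {R ι : Type*} [CommSemiring R] [Fintype ι] [DecidableEq ι]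
    (A : Matrix ι ι R) (k : ℕ) (w : ι → R) : (A.vecMulLinear ^ k) w = w ᵥ* (A ^ k) := by
  induction k generalizing w with
  | zero => simp
  | succ k ih =>
    rw [pow_succ, Module.End.mul_apply, ih, vecMulLinear_apply, vecMul_vecMul, ← pow_succ']

theorem Matrix.aeval_vecMulLinear_apply {R ι : Type*} [CommSemiring R] [Fintype ι]
    [DecidableEq ι] (A : Matrix ι ι R) (q : R[X]) (w : ι → R) :
    aeval A.vecMulLinear q w = w ᵥ* aeval A q := by
  induction q using Polynomial.induction_on' with
  | add p q hp hq => simp only [map_add, LinearMap.add_apply, hp, hq, vecMul_add]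
  | monomial k c =>
    simp [aeval_monomial, vecMulLinear_pow_apply, ← Algebra.smul_def, vecMul_smul]

theorem aspan_eq_map_span {F : Type*} [Field F] {n : ℕ} (A : Matrix (Fin n) (Fin n) F)
    (v : Fin n → F) :
    aspan A v = ((F[X] ∙ AEval'.of A.vecMulLinear v).restrictScalars F).map
      (AEval'.of A.vecMulLinear).symm.toLinearMap := by
  rw [aspan, ← Submodule.span_eq (Submodule.map _ _)]
  congr 1
  ext w
  simp [Submodule.mem_span_singleton, aeval_vecMulLinear_apply, eq_comm]

theorem stmt15_general {F : Type*} [Field F] {n : ℕ} (A : Matrix (Fin n) (Fin n) F)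
    (p : F[X]) (hp : p.Monic) (m : ℕ)
    (hmin : minpoly F A = p ^ m) :
    ∃ (k : ℕ) (v : Fin k → Fin n → F),
      DirectSum.IsInternal (fun i => aspan A (v i)) := by
  have hann : aeval A.vecMulLinear (p ^ m) = 0 := LinearMap.ext fun w => by
    rw [aeval_vecMulLinear_apply, ← hmin, minpoly.aeval, vecMul_zero, LinearMap.zero_apply]
  have htors : IsTorsion F[X] (AEval' A.vecMulLinear) :=
    AEval.isTorsion_of_aeval_eq_zero hann (pow_ne_zero m hp.ne_zero)
  obtain ⟨k, v, hv⟩ := exists_isInternal_span_singleton_of_isTorsion htors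
  have hvF : IsInternal fun i => (F[X] ∙ v i).restrictScalars F := hv
  refine ⟨k, fun i => (AEval'.of A.vecMulLinear).symm (v i), ?_⟩
  simp only [aspan_eq_map_span, LinearEquiv.apply_symm_apply]
  exact hvF.map_linearEquiv (AEval'.of A.vecMulLinear).symm

/-- Cyclic decomposition of a primary matrix: if `μ_A = p^m` with `p` irreducible, then `Fⁿ`
is a direct sum of `A`-cyclic subspaces. -/
theorem stmt15 {F : Type*} [Field F] {n : ℕ} (A : Matrix (Fin n) (Fin n) F) (hA : IsUnit A)
    (p : F[X]) (hp : p.Monic) (hirr : Irreducible p) (m : ℕ)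
    (hmin : minpoly F A = p ^ m) :
    ∃ (k : ℕ) (v : Fin k → Fin n → F),
      DirectSum.IsInternal (fun i => aspan A (v i)) :=
  stmt15_general A p hp m hmin
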